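/- arXiv:1008.3034 — 2 statements merged into one kernel-verified Lean document; each statement's English description precedes it below -/
import Mathlib

section
/- Let (E_k)_{0≤k≤n} be measurable spaces, let Q_{k+1} and Q̂_{k+1} be bounded positive integral kernels from E_k to E_{k+1}, let f_k be bounded nonnegative measurable functions on E_k, and define v_k and v̂_k by the backward recursions v_n = v̂_n = f_n, v_k = f_k ∨ Q_{k+1}(v_{k+1}) and v̂_k = f_k ∨ Q̂_{k+1}(v̂_{k+1}). Then for every 0 ≤ k < n and every x ∈ E_k, |v_k(x) − v̂_k(x)| ≤ Σ_{l=k}^{n−1} Q̂_{k,l}( |(Q_{l+1} − Q̂_{l+1})(v_{l+1})| )(x), where Q̂_{k,l} := Q̂_{k+1}Q̂_{k+2}⋯Q̂_l with Q̂_{k,k} = Id. -/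
/-!
Both value functions are bounded and measurable, since the kernels are bounded. One step of the
recursion gives, pointwise,
`|v_k - v̂_k| ≤ |(Q_{k+1} - Q̂_{k+1})(v_{k+1})| + Q̂_{k+1}(|v_{k+1} - v̂_{k+1}|)`,
because `max a ·` is 1-Lipschitz and `Q̂_{k+1}` is positive; unrolling this inequality from
`|v_n - v̂_n| = 0` backwards yields the sum.
-/

open MeasureTheory ProbabilityTheory

/-- The action of the composition of kernels `Q̂_{k+1} Q̂_{k+2} ⋯ Q̂_{k+j}` on a function on
`E (k+j)`, producing a function on `E k`; for `j = 0` this is the identity. -/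
noncomputable def kernelComp {E : ℕ → Type*} [∀ k, MeasurableSpace (E k)]
    (K : ∀ k, Kernel (E k) (E (k + 1))) (k : ℕ) :
    ∀ j : ℕ, (E (k + j) → ℝ) → E k → ℝ
  | 0, φ => φ
  | j + 1, φ => kernelComp K k j (fun x => ∫ y, φ y ∂(K (k + j) x))

open Finset

structure IsBddMeasurable {β : Type*} [MeasurableSpace β] (φ : β → ℝ) : Prop where
  measurable : Measurable φ
  exists_abs_le : ∃ C, ∀ y, |φ y| ≤ C

namespace IsBddMeasurable

variable {α β : Type*} [MeasurableSpace α] [MeasurableSpace β] {φ ψ : β → ℝ}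

lemma integrable (hφ : IsBddMeasurable φ) (μ : Measure β) [IsFiniteMeasure μ] :
    Integrable φ μ :=
  let ⟨C, hC⟩ := hφ.exists_abs_le
  .of_bound hφ.measurable.aestronglyMeasurable C (ae_of_all _ hC)

lemma sub (hφ : IsBddMeasurable φ) (hψ : IsBddMeasurable ψ) :
    IsBddMeasurable fun y => φ y - ψ y := by
  obtain ⟨C, hC⟩ := hφ.exists_abs_le
  obtain ⟨D, hD⟩ := hψ.exists_abs_le
  exact ⟨hφ.measurable.sub hψ.measurable,
    C + D, fun y => (abs_sub _ _).trans (add_le_add (hC y) (hD y))⟩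

lemma abs (hφ : IsBddMeasurable φ) : IsBddMeasurable fun y => |φ y| := by
  obtain ⟨C, hC⟩ := hφ.exists_abs_le
  exact ⟨hφ.measurable.abs, C, fun y => (abs_abs (φ y)).symm ▸ hC y⟩

lemma integral_kernel (hφ : IsBddMeasurable φ) (κ : Kernel α β) [IsFiniteKernel κ] :
    IsBddMeasurable fun x => ∫ y, φ y ∂κ x := by
  obtain ⟨C, hC⟩ := hφ.exists_abs_le
  refine ⟨hφ.measurable.stronglyMeasurable.integral_kernel.measurable,
    max C 0 * κ.bound.toReal, fun x => ?_⟩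
  have hmass : (κ x).real Set.univ ≤ κ.bound.toReal :=
    ENNReal.toReal_mono κ.bound_ne_top (κ.measure_le_bound x Set.univ)
  calc |∫ y, φ y ∂κ x| ≤ C * (κ x).real Set.univ := by
        simpa only [Real.norm_eq_abs] using
          norm_integral_le_of_norm_le_const (μ := κ x) (f := φ) (ae_of_all _ hC)
    _ ≤ max C 0 * (κ x).real Set.univ := by gcongr; exact le_max_left C 0
    _ ≤ max C 0 * κ.bound.toReal := mul_le_mul_of_nonneg_left hmass (le_max_right C 0)

lemma max (hφ : IsBddMeasurable φ) (hψ : IsBddMeasurable ψ) :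
    IsBddMeasurable fun y => max (φ y) (ψ y) := by
  obtain ⟨C, hC⟩ := hφ.exists_abs_le
  obtain ⟨D, hD⟩ := hψ.exists_abs_le
  exact ⟨hφ.measurable.max hψ.measurable, Max.max C D, fun y =>
    (abs_max_le_max_abs_abs).trans (max_le_max (hC y) (hD y))⟩

end IsBddMeasurable

section KernelComp

variable {E : ℕ → Type*} [∀ k, MeasurableSpace (E k)] (K : ∀ k, Kernel (E k) (E (k + 1)))

lemma IsBddMeasurable.kernelComp [∀ k, IsFiniteKernel (K k)] {k j : ℕ} {φ : E (k + j) → ℝ}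
    (hφ : IsBddMeasurable φ) : IsBddMeasurable (kernelComp K k j φ) := by
  induction j with
  | zero => exact hφ
  | succ j ih => exact ih (hφ.integral_kernel (K (k + j)))

lemma kernelComp_succ_eq_integral (Φ : ∀ m, E m → ℝ) (k j : ℕ) (x : E k) :
    kernelComp K k (j + 1) (Φ (k + j + 1)) x
      = ∫ y, kernelComp K (k + 1) j (Φ (k + 1 + j)) y ∂K k x := by
  induction j generalizing Φ with
  | zero => rfl
  | succ j ih => exact ih fun m y => ∫ z, Φ (m + 1) z ∂K m y

theorem le_sum_kernelComp_of_le_add_integral [∀ k, IsFiniteKernel (K k)] {n : ℕ}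
    {D G : ∀ k, E k → ℝ} (hD : ∀ k ≤ n, IsBddMeasurable (D k))
    (hG : ∀ k < n, IsBddMeasurable (G k)) (hterm : ∀ x, D n x ≤ 0)
    (hrec : ∀ k < n, ∀ x, D k x ≤ G k x + ∫ y, D (k + 1) y ∂K k x)
    {k : ℕ} (hk : k ≤ n) (x : E k) :
    D k x ≤ ∑ j ∈ range (n - k), kernelComp K k j (G (k + j)) x := by
  induction hk using Nat.decreasingInduction with
  | self => simpa using hterm x
  | of_succ k hk ih =>
    have hterms : ∀ j ∈ range (n - (k + 1)),
        Integrable (kernelComp K (k + 1) j (G (k + 1 + j))) (K k x) := fun j hj =>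
      ((hG _ (by grind)).kernelComp K).integrable _
    calc D k x ≤ G k x + ∫ y, D (k + 1) y ∂K k x := hrec k hk x
      _ ≤ G k x + ∫ y, ∑ j ∈ range (n - (k + 1)),
            kernelComp K (k + 1) j (G (k + 1 + j)) y ∂K k x :=
        add_le_add le_rfl <|
          integral_mono ((hD _ hk).integrable _) (integrable_finsetSum _ hterms) ih
      _ = G k x + ∑ j ∈ range (n - (k + 1)), kernelComp K k (j + 1) (G (k + j + 1)) x := by
        rw [integral_finsetSum _ hterms]
        simp only [kernelComp_succ_eq_integral K G]
      _ = ∑ j ∈ range (n - k), kernelComp K k j (G (k + j)) x := by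
        rw [show n - k = n - (k + 1) + 1 by omega, sum_range_succ', add_comm]
        rfl

end KernelComp

lemma abs_max_integral_sub_max_integral_le {β : Type*} [MeasurableSpace β] {μ ν : Measure β}
    {φ ψ : β → ℝ} (hφ : Integrable φ ν) (hψ : Integrable ψ ν) (a : ℝ) :
    |max a (∫ y, φ y ∂μ) - max a (∫ y, ψ y ∂ν)|
      ≤ |(∫ y, φ y ∂μ) - ∫ y, φ y ∂ν| + ∫ y, |φ y - ψ y| ∂ν :=
  calc |max a (∫ y, φ y ∂μ) - max a (∫ y, ψ y ∂ν)| ≤ |(∫ y, φ y ∂μ) - ∫ y, ψ y ∂ν| := by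
        simpa only [max_comm a] using abs_max_sub_max_le_abs _ _ a
    _ ≤ |(∫ y, φ y ∂μ) - ∫ y, φ y ∂ν| + |(∫ y, φ y ∂ν) - ∫ y, ψ y ∂ν| := abs_sub_le _ _ _
    _ ≤ |(∫ y, φ y ∂μ) - ∫ y, φ y ∂ν| + ∫ y, |φ y - ψ y| ∂ν := by
        rw [← integral_sub hφ hψ]
        gcongr
        exact abs_integral_le_integral_abs

theorem isBddMeasurable_of_snell_rec {E : ℕ → Type*} [∀ k, MeasurableSpace (E k)]
    (K : ∀ k, Kernel (E k) (E (k + 1))) [∀ k, IsFiniteKernel (K k)] {n : ℕ}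
    {f v : ∀ k, E k → ℝ} (hf : ∀ k, IsBddMeasurable (f k)) (hterm : v n = f n)
    (hrec : ∀ k < n, ∀ x, v k x = max (f k x) (∫ y, v (k + 1) y ∂K k x))
    {k : ℕ} (hk : k ≤ n) : IsBddMeasurable (v k) := by
  induction hk using Nat.decreasingInduction with
  | self => exact hterm ▸ hf n
  | of_succ k hk ih => exact funext (hrec k hk) ▸ (hf k).max (ih.integral_kernel (K k))

/-- Robustness of the Snell envelope recursion with common gain functions `f_k` but two
different kernels `Q` and `Q̂`:
`|v_k(x) - v̂_k(x)| ≤ Σ_{l=k}^{n-1} Q̂_{k,l}(|(Q_{l+1} - Q̂_{l+1})(v_{l+1})|)(x)`. -/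
theorem snell_robustness_same_gain
    (E : ℕ → Type*) [∀ k, MeasurableSpace (E k)] (n : ℕ)
    (Q Qhat : ∀ k, Kernel (E k) (E (k + 1)))
    [∀ k, IsFiniteKernel (Q k)] [∀ k, IsFiniteKernel (Qhat k)]
    (f : ∀ k, E k → ℝ)
    (hf_meas : ∀ k, Measurable (f k)) (hf_nonneg : ∀ k x, 0 ≤ f k x)
    (hf_bdd : ∀ k, ∃ C, ∀ x, f k x ≤ C)
    (v vhat : ∀ k, E k → ℝ)
    (hv_term : v n = f n)
    (hv_rec : ∀ k, k < n → ∀ x, v k x = max (f k x) (∫ y, v (k + 1) y ∂(Q k x)))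
    (hvhat_term : vhat n = f n)
    (hvhat_rec : ∀ k, k < n →
      ∀ x, vhat k x = max (f k x) (∫ y, vhat (k + 1) y ∂(Qhat k x))) :
    ∀ k, k < n → ∀ x : E k,
      |v k x - vhat k x| ≤
        ∑ j ∈ Finset.range (n - k),
          kernelComp Qhat k j
            (fun y => |(∫ z, v (k + j + 1) z ∂(Q (k + j) y))
              - ∫ z, v (k + j + 1) z ∂(Qhat (k + j) y)|) x := by
  intro k hk x
  have hf : ∀ k, IsBddMeasurable (f k) := fun k =>
    ⟨hf_meas k, (hf_bdd k).imp fun C hC x => (abs_of_nonneg (hf_nonneg k x)).trans_le (hC x)⟩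
  have hv : ∀ k ≤ n, IsBddMeasurable (v k) := fun k =>
    isBddMeasurable_of_snell_rec Q hf hv_term hv_rec
  have hvhat : ∀ k ≤ n, IsBddMeasurable (vhat k) := fun k =>
    isBddMeasurable_of_snell_rec Qhat hf hvhat_term hvhat_rec
  refine le_sum_kernelComp_of_le_add_integral Qhat (D := fun k y => |v k y - vhat k y|)
    (G := fun k y => |(∫ z, v (k + 1) z ∂Q k y) - ∫ z, v (k + 1) z ∂Qhat k y|)
    (fun k hk => ((hv k hk).sub (hvhat k hk)).abs)
    (fun k hk => (((hv _ hk).integral_kernel (Q k)).sub ((hv _ hk).integral_kernel (Qhat k))).abs)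
    (by simp [hv_term, hvhat_term]) (fun k hk x => ?_) hk.le x
  rw [hv_rec k hk x, hvhat_rec k hk x]
  exact abs_max_integral_sub_max_integral_le ((hv _ hk).integrable _) ((hvhat _ hk).integrable _) _
end

section
/- Let U be a nonnegative random variable and b < ∞ a constant such that E(U^r)^{1/r} ≤ a(r) · b for all integers r ≥ 1, where a(2m)^{2m} = (2m)_m 2^{−m} and a(2m+1)^{2m+1} = ((2m+1)_{m+1}/√(m+1/2)) 2^{−(m+1/2)}. Then for every ε > 0, P(U ≥ b + ε) ≤ exp(−ε²/(2b²)). -/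
/-!
Chernoff's bound with `t = ε / b²`. The constants satisfy `a(r)^r ≤ r! / (⌊r/2⌋! 2^⌊r/2⌋)`, so the
moment series of `E exp(tU)` is dominated termwise by `∑ x^r / (⌊r/2⌋! 2^⌊r/2⌋) = (1 + x) exp(x²/2)`
with `x = ε / b`. Bounding `1 + x ≤ exp x` gives `P(U ≥ b + ε) ≤ exp(-t(b + ε) + x + x²/2)`, and the
exponent is exactly `-ε²/(2b²)`.
-/

open MeasureTheory ProbabilityTheory

/-- The Khintchine-type constants `a(p)`, defined by
`a(2m)^{2m} = (2m)_m 2^{-m}` and `a(2m+1)^{2m+1} = ((2m+1)_{m+1}/√(m+1/2)) 2^{-(m+1/2)}`. -/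
noncomputable def aConst (p : ℕ) : ℝ :=
  if Even p then
    ((p.descFactorial (p / 2) : ℝ) * (2 : ℝ) ^ (-(p : ℝ) / 2)) ^ ((p : ℝ)⁻¹)
  else
    ((p.descFactorial ((p + 1) / 2) : ℝ) / Real.sqrt ((p : ℝ) / 2)
        * (2 : ℝ) ^ (-(p : ℝ) / 2)) ^ ((p : ℝ)⁻¹)

open Real
open scoped Nat

lemma Nat.cast_descFactorial_eq_div {K : Type*} [Field K] [CharZero K] {n k : ℕ} (h : k ≤ n) :
    (n.descFactorial k : K) = n ! / (n - k)! := by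
  rw [eq_div_iff (Nat.cast_ne_zero.2 (Nat.factorial_ne_zero _)), mul_comm]
  exact_mod_cast Nat.factorial_mul_descFactorial h

lemma aConst_two_mul_pow (m : ℕ) :
    aConst (2 * m) ^ (2 * m) = (2 * m)! / (m ! * 2 ^ m) := by
  rcases m.eq_zero_or_pos with rfl | hm
  · simp
  rw [aConst, if_pos (even_two_mul m), Real.rpow_inv_natCast_pow (by positivity) (by omega),
    Nat.mul_div_cancel_left m two_pos, Nat.cast_descFactorial_eq_div (by omega),
    show 2 * m - m = m by omega, show -((2 * m : ℕ) : ℝ) / 2 = -(m : ℝ) by push_cast; ring,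
    rpow_neg zero_le_two, rpow_natCast]
  field_simp

lemma aConst_two_mul_add_one_pow (m : ℕ) :
    aConst (2 * m + 1) ^ (2 * m + 1) = (2 * m + 1)! / (m ! * 2 ^ m * √(2 * m + 1)) := by
  have h2 : (2 : ℝ) ^ (-((2 * m + 1 : ℕ) : ℝ) / 2) = (2 ^ m)⁻¹ / √2 := by
    rw [sqrt_eq_rpow, ← rpow_natCast, ← rpow_neg zero_le_two, ← rpow_sub two_pos]
    congr 1
    push_cast
    ring
  rw [aConst, if_neg (Nat.not_even_two_mul_add_one m),
    Real.rpow_inv_natCast_pow (by positivity) (by omega),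
    show (2 * m + 1 + 1) / 2 = m + 1 by omega, Nat.cast_descFactorial_eq_div (by omega),
    show 2 * m + 1 - (m + 1) = m by omega, h2, sqrt_div' _ zero_le_two]
  push_cast
  field_simp

lemma aConst_pow_le (r : ℕ) : aConst r ^ r ≤ r ! / ((r / 2)! * 2 ^ (r / 2)) := by
  obtain ⟨m, rfl | rfl⟩ := Nat.even_or_odd' r
  · rw [aConst_two_mul_pow, Nat.mul_div_cancel_left m two_pos]
  · rw [aConst_two_mul_add_one_pow, show (2 * m + 1) / 2 = m by omega]
    refine div_le_div_of_nonneg_left (by positivity) (by positivity)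
      (le_mul_of_one_le_right (by positivity) (one_le_sqrt.2 ?_))
    linarith [m.cast_nonneg (α := ℝ)]

lemma aConst_one : aConst 1 = 1 := by
  simpa using aConst_two_mul_add_one_pow 0

lemma hasSum_pow_div_two_pow_mul_factorial (x : ℝ) :
    HasSum (fun r : ℕ => x ^ r / ((r / 2)! * 2 ^ (r / 2))) ((1 + x) * exp (x ^ 2 / 2)) := by
  have hexp : HasSum (fun m : ℕ => (x ^ 2 / 2) ^ m / m !) (exp (x ^ 2 / 2)) := by
    rw [exp_eq_exp_ℝ]
    exact NormedSpace.expSeries_div_hasSum_exp _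
  rw [add_mul, one_mul]
  refine HasSum.even_add_odd ?_ (hexp.mul_left x |>.congr_fun fun m => ?_)
  · convert hexp using 2 with m
    rw [Nat.mul_div_cancel_left m two_pos, div_pow, pow_mul]
    ring
  · rw [show (2 * m + 1) / 2 = m by omega, div_pow, pow_succ, pow_mul]
    ring

section MomentSeries

variable {Ω : Type*} [MeasurableSpace Ω] {μ : Measure Ω} {X : Ω → ℝ} {t : ℝ}

lemma lintegral_ofReal_exp_mul_eq_tsum (hX : ∀ᵐ ω ∂μ, 0 ≤ X ω)
    (hint : ∀ r : ℕ, Integrable (fun ω => X ω ^ r) μ) (ht : 0 ≤ t) :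
    ∫⁻ ω, ENNReal.ofReal (exp (t * X ω)) ∂μ =
      ∑' r : ℕ, ENNReal.ofReal (t ^ r / r ! * ∫ ω, X ω ^ r ∂μ) := by
  have hmeas : AEMeasurable X μ := by
    simpa using (hint 1).aestronglyMeasurable.aemeasurable
  have hexp : ∀ᵐ ω ∂μ, ENNReal.ofReal (exp (t * X ω)) =
      ∑' r : ℕ, ENNReal.ofReal (t ^ r / r ! * X ω ^ r) := by
    filter_upwards [hX] with ω hω
    have hs := NormedSpace.expSeries_div_hasSum_exp (t * X ω)
    rw [← exp_eq_exp_ℝ] at hs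
    rw [← hs.tsum_eq, ENNReal.ofReal_tsum_of_nonneg (fun r => by positivity) hs.summable]
    simp_rw [mul_pow, div_mul_eq_mul_div]
  rw [lintegral_congr_ae hexp,
    lintegral_tsum fun r => ((hmeas.pow_const r).const_mul _).ennreal_ofReal]
  congr 1 with r
  rw [← integral_const_mul, ofReal_integral_eq_lintegral_ofReal ((hint r).const_mul _)]
  filter_upwards [hX] with ω hω
  positivity

lemma pow_div_factorial_mul_integral_pow_nonneg (hX : ∀ᵐ ω ∂μ, 0 ≤ X ω) (ht : 0 ≤ t) (r : ℕ) :
    0 ≤ t ^ r / r ! * ∫ ω, X ω ^ r ∂μ :=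
  mul_nonneg (by positivity) (integral_nonneg_of_ae (by filter_upwards [hX] with ω hω; positivity))

variable {f : ℕ → ℝ} {s : ℝ}

lemma lintegral_ofReal_exp_mul_le_of_hasSum (hX : ∀ᵐ ω ∂μ, 0 ≤ X ω)
    (hint : ∀ r : ℕ, Integrable (fun ω => X ω ^ r) μ) (ht : 0 ≤ t)
    (hf : ∀ r : ℕ, t ^ r / r ! * ∫ ω, X ω ^ r ∂μ ≤ f r) (hs : HasSum f s) :
    ∫⁻ ω, ENNReal.ofReal (exp (t * X ω)) ∂μ ≤ ENNReal.ofReal s := by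
  have hf0 (r : ℕ) : 0 ≤ f r := (pow_div_factorial_mul_integral_pow_nonneg hX ht r).trans (hf r)
  rw [lintegral_ofReal_exp_mul_eq_tsum hX hint ht, ← hs.tsum_eq,
    ENNReal.ofReal_tsum_of_nonneg hf0 hs.summable]
  exact ENNReal.tsum_le_tsum fun r => ENNReal.ofReal_le_ofReal (hf r)

lemma integrable_exp_mul_of_hasSum (hX : ∀ᵐ ω ∂μ, 0 ≤ X ω)
    (hint : ∀ r : ℕ, Integrable (fun ω => X ω ^ r) μ) (ht : 0 ≤ t)
    (hf : ∀ r : ℕ, t ^ r / r ! * ∫ ω, X ω ^ r ∂μ ≤ f r) (hs : HasSum f s) :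
    Integrable (fun ω => exp (t * X ω)) μ := by
  have hmeas : AEMeasurable X μ := by
    simpa using (hint 1).aestronglyMeasurable.aemeasurable
  refine ⟨(measurable_exp.comp_aemeasurable (hmeas.const_mul t)).aestronglyMeasurable, ?_⟩
  rw [hasFiniteIntegral_iff_ofReal (ae_of_all _ fun ω => (exp_pos _).le)]
  exact (lintegral_ofReal_exp_mul_le_of_hasSum hX hint ht hf hs).trans_lt ENNReal.ofReal_lt_top

lemma mgf_le_of_hasSum (hX : ∀ᵐ ω ∂μ, 0 ≤ X ω)
    (hint : ∀ r : ℕ, Integrable (fun ω => X ω ^ r) μ) (ht : 0 ≤ t)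
    (hf : ∀ r : ℕ, t ^ r / r ! * ∫ ω, X ω ^ r ∂μ ≤ f r) (hs : HasSum f s) :
    mgf X μ t ≤ s := by
  have hs0 : 0 ≤ s :=
    hs.nonneg fun r => (pow_div_factorial_mul_integral_pow_nonneg hX ht r).trans (hf r)
  rw [mgf, ← ENNReal.ofReal_le_ofReal_iff hs0, ofReal_integral_eq_lintegral_ofReal
    (integrable_exp_mul_of_hasSum hX hint ht hf hs) (ae_of_all _ fun ω => (exp_pos _).le)]
  exact lintegral_ofReal_exp_mul_le_of_hasSum hX hint ht hf hs

lemma integral_pow_le_pow_of_rpow_inv_le [IsProbabilityMeasure μ] (hX : ∀ᵐ ω ∂μ, 0 ≤ X ω)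
    {c : ℕ → ℝ} (hmom : ∀ r : ℕ, 1 ≤ r → (∫ ω, X ω ^ r ∂μ) ^ ((r : ℝ)⁻¹) ≤ c r) (r : ℕ) :
    ∫ ω, X ω ^ r ∂μ ≤ c r ^ r := by
  rcases r.eq_zero_or_pos with rfl | hr
  · simp
  have hI : 0 ≤ ∫ ω, X ω ^ r ∂μ :=
    integral_nonneg_of_ae (by filter_upwards [hX] with ω hω; positivity)
  have hc : 0 ≤ c r := (rpow_nonneg hI _).trans (hmom r hr)
  rw [← rpow_natCast]
  exact (rpow_inv_le_iff_of_pos hI hc (by exact_mod_cast hr)).1 (hmom r hr)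

lemma measureReal_ge_le_exp_of_integral_pow_le [IsFiniteMeasure μ] (hX : ∀ᵐ ω ∂μ, 0 ≤ X ω)
    (hint : ∀ r : ℕ, Integrable (fun ω => X ω ^ r) μ) {b ε : ℝ} (hb : 0 < b) (hε : 0 ≤ ε)
    (hmom : ∀ r : ℕ, ∫ ω, X ω ^ r ∂μ ≤ r ! / ((r / 2)! * 2 ^ (r / 2)) * b ^ r) :
    μ.real {ω | b + ε ≤ X ω} ≤ exp (-ε ^ 2 / (2 * b ^ 2)) := by
  set t := ε / b ^ 2
  set x := ε / b
  have ht : 0 ≤ t := by positivity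
  have hf : ∀ r : ℕ, t ^ r / r ! * ∫ ω, X ω ^ r ∂μ ≤ x ^ r / ((r / 2)! * 2 ^ (r / 2)) := by
    intro r
    calc t ^ r / r ! * ∫ ω, X ω ^ r ∂μ
        ≤ t ^ r / r ! * (r ! / ((r / 2)! * 2 ^ (r / 2)) * b ^ r) := by gcongr; exact hmom r
      _ = (t * b) ^ r / ((r / 2)! * 2 ^ (r / 2)) := by field_simp; ring
      _ = x ^ r / ((r / 2)! * 2 ^ (r / 2)) := by
        rw [show t * b = x by simp only [t, x]; field_simp]
  have hs := hasSum_pow_div_two_pow_mul_factorial x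
  calc μ.real {ω | b + ε ≤ X ω} ≤ exp (-t * (b + ε)) * mgf X μ t :=
        measure_ge_le_exp_mul_mgf _ ht (integrable_exp_mul_of_hasSum hX hint ht hf hs)
    _ ≤ exp (-t * (b + ε)) * ((1 + x) * exp (x ^ 2 / 2)) := by
        gcongr; exact mgf_le_of_hasSum hX hint ht hf hs
    _ ≤ exp (-t * (b + ε)) * exp (x + x ^ 2 / 2) := by
        rw [exp_add]; gcongr; linarith [add_one_le_exp x]
    _ = exp (-ε ^ 2 / (2 * b ^ 2)) := by
        rw [← exp_add]; congr 1; simp only [t, x]; field_simp; ring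

end MomentSeries

theorem concentration_of_khintchine_moments_general
    (Ω : Type*) [MeasurableSpace Ω] (P : Measure Ω) [IsProbabilityMeasure P]
    (U : Ω → ℝ) (hU_nonneg : ∀ ω, 0 ≤ U ω)
    (hU_int : ∀ r : ℕ, Integrable (fun ω => U ω ^ r) P)
    (b : ℝ)
    (hmom : ∀ r : ℕ, 1 ≤ r → (∫ ω, U ω ^ r ∂P) ^ ((r : ℝ)⁻¹) ≤ aConst r * b) :
    ∀ ε : ℝ, 0 < ε →
      (P {ω | b + ε ≤ U ω}).toReal ≤ Real.exp (-ε ^ 2 / (2 * b ^ 2)) := by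
  intro ε hε
  have hU : ∀ᵐ ω ∂P, 0 ≤ U ω := ae_of_all _ hU_nonneg
  have hpow := integral_pow_le_pow_of_rpow_inv_le hU hmom
  have hb : 0 ≤ b := by
    simpa [aConst_one] using (integral_nonneg fun ω => pow_nonneg (hU_nonneg ω) 1).trans (hpow 1)
  rcases hb.eq_or_lt with rfl | hb
  · rw [zero_pow two_ne_zero, mul_zero, div_zero, Real.exp_zero]
    exact measureReal_le_one
  refine measureReal_ge_le_exp_of_integral_pow_le hU hU_int hb hε.le fun r => ?_
  calc ∫ ω, U ω ^ r ∂P ≤ aConst r ^ r * b ^ r := (hpow r).trans_eq (mul_pow _ _ _)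
    _ ≤ r ! / ((r / 2)! * 2 ^ (r / 2)) * b ^ r := by gcongr; exact aConst_pow_le r

/-- If a nonnegative random variable `U` satisfies the moment bounds
`E(U^r)^{1/r} ≤ a(r)·b` for all integers `r ≥ 1`, then it satisfies the exponential
concentration inequality `P(U ≥ b + ε) ≤ exp(-ε²/(2b²))` for every `ε > 0`. -/
theorem concentration_of_khintchine_moments
    (Ω : Type*) [MeasurableSpace Ω] (P : Measure Ω) [IsProbabilityMeasure P]
    (U : Ω → ℝ) (hU_meas : Measurable U) (hU_nonneg : ∀ ω, 0 ≤ U ω)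
    (hU_int : ∀ r : ℕ, Integrable (fun ω => U ω ^ r) P)
    (b : ℝ)
    (hmom : ∀ r : ℕ, 1 ≤ r → (∫ ω, U ω ^ r ∂P) ^ ((r : ℝ)⁻¹) ≤ aConst r * b) :
    ∀ ε : ℝ, 0 < ε →
      (P {ω | b + ε ≤ U ω}).toReal ≤ Real.exp (-ε ^ 2 / (2 * b ^ 2)) :=
  concentration_of_khintchine_moments_general Ω P U hU_nonneg hU_int b hmom
end
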